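/- arXiv:2404.05121 — 8 statements merged into one kernel-verified Lean document; each statement's English description precedes it below -/
import Mathlib

section
/- Let p be a proximal point of h at x with parameter μ, i.e., p minimizes z ↦ h(z) + ‖z − x‖²/(2μ) over E. Then the Moreau envelope M_h^μ is differentiable at x with gradient ∇M_h^μ(x) = (x − p)/μ. -/
/-!
Taking `p` as the candidate in the infimum at `y` gives the quadratic upper bound
`M y ≤ M x + ⟪(x - p) / μ, y - x⟫ + ‖y - x‖² / (2μ)`. Since `(y, z) ↦ h z + ‖z - y‖² / (2μ)` is
jointly convex, `M` is midpoint convex: `2 M x ≤ M (x + v) + M (x - v)`, and the upper bound at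
`x - v` turns this into the matching lower bound at `x + v`. Squeezed between two quadratics that
touch at `x` with common slope `(x - p) / μ`, `M` has this gradient at `x`.
-/

open Set Asymptotics
open scoped NNReal RealInnerProductSpace

theorem ConvexOn.map_midpoint_le {V : Type*} [AddCommGroup V] [Module ℝ V] {f : V → ℝ}
    (hf : ConvexOn ℝ univ f) (a b : V) : f (midpoint ℝ a b) ≤ (f a + f b) / 2 := by
  have := hf.2 (mem_univ a) (mem_univ b) (by norm_num : (0 : ℝ) ≤ 1 / 2)
    (by norm_num : (0 : ℝ) ≤ 1 / 2) (by norm_num)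
  rw [midpoint_eq_smul_add, smul_add, invOf_eq_inv]
  simp only [smul_eq_mul] at this
  linarith

section

variable {E : Type*} [NormedAddCommGroup E] [InnerProductSpace ℝ E]

theorem norm_midpoint_sq_le (a b : E) : ‖midpoint ℝ a b‖ ^ 2 ≤ (‖a‖ ^ 2 + ‖b‖ ^ 2) / 2 := by
  have hpar := parallelogram_law_with_norm ℝ a b
  have hmid : ‖midpoint ℝ a b‖ = ‖a + b‖ / 2 := by
    rw [midpoint_eq_smul_add, norm_smul, invOf_eq_inv, norm_inv, Real.norm_two, inv_mul_eq_div]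
  rw [hmid]
  nlinarith [sq_nonneg ‖a - b‖]

theorem hasGradientAt_of_abs_sub_sub_inner_le [CompleteSpace E] {f : E → ℝ} {g x : E} (C : ℝ)
    (hf : ∀ v, |f (x + v) - f x - ⟪g, v⟫| ≤ C * ‖v‖ ^ 2) : HasGradientAt f g x := by
  rw [hasGradientAt_iff_isLittleO_nhds_zero]
  refine IsBigO.trans_isLittleO (g := fun v : E => ‖v‖ ^ 2) ?_ (isLittleO_norm_pow_id one_lt_two)
  exact .of_bound C (.of_forall fun v => by simpa using hf v)

theorem hasGradientAt_of_midpoint_convex_of_le_quadratic [CompleteSpace E] {f : E → ℝ} {g x : E}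
    {C : ℝ} (hmid : ∀ v, 2 * f x ≤ f (x + v) + f (x - v))
    (hle : ∀ v, f (x + v) ≤ f x + ⟪g, v⟫ + C * ‖v‖ ^ 2) : HasGradientAt f g x := by
  refine hasGradientAt_of_abs_sub_sub_inner_le C fun v => abs_le.2 ⟨?_, by linarith [hle v]⟩
  have hle_neg := hle (-v)
  rw [← sub_eq_add_neg, inner_neg_right, norm_neg] at hle_neg
  linarith [hmid v]

end

section

variable {E : Type*} [NormedAddCommGroup E]

noncomputable def moreauObjective (h : E → ℝ) (μ : ℝ) (y z : E) : ℝ :=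
  h z + ‖z - y‖ ^ 2 / (2 * μ)

/-- An infimum over a range that is not bounded below is the junk value `0`, so estimates on
`moreauEnvelope` go through `bddBelow_range_moreauObjective`. -/
noncomputable def moreauEnvelope (h : E → ℝ) (μ : ℝ) (y : E) : ℝ :=
  ⨅ z, moreauObjective h μ y z

theorem moreauEnvelope_eq_of_forall_le {h : E → ℝ} {μ : ℝ} {x p : E}
    (hp : ∀ z, moreauObjective h μ x p ≤ moreauObjective h μ x z) :
    moreauEnvelope h μ x = moreauObjective h μ x p :=
  le_antisymm (ciInf_le ⟨_, forall_mem_range.2 hp⟩ p) (le_ciInf hp)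

variable [InnerProductSpace ℝ E] {h : E → ℝ} {μ : ℝ}

theorem moreauObjective_eq_add_inner (hμ : μ ≠ 0) (x y p : E) :
    moreauObjective h μ y p =
      moreauObjective h μ x p + ⟪μ⁻¹ • (x - p), y - x⟫ + ‖y - x‖ ^ 2 / (2 * μ) := by
  have hsplit : p - y = (p - x) - (y - x) := by abel
  have hflip : ⟪x - p, y - x⟫ = -⟪p - x, y - x⟫ := by rw [← inner_neg_left, neg_sub]
  rw [moreauObjective, moreauObjective, hsplit, norm_sub_sq_real, real_inner_smul_left, hflip]
  field_simp
  ring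

theorem moreauObjective_midpoint_le (hconv : ConvexOn ℝ univ h) (hμ : 0 < μ) (y y' z z' : E) :
    2 * moreauObjective h μ (midpoint ℝ y y') (midpoint ℝ z z') ≤
      moreauObjective h μ y z + moreauObjective h μ y' z' := by
  have hh_mid := hconv.map_midpoint_le z z'
  have hnorm : 2 * (‖midpoint ℝ z z' - midpoint ℝ y y'‖ ^ 2 / (2 * μ)) ≤
      ‖z - y‖ ^ 2 / (2 * μ) + ‖z' - y'‖ ^ 2 / (2 * μ) := by
    have hsub : midpoint ℝ z z' - midpoint ℝ y y' = midpoint ℝ (z - y) (z' - y') :=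
      midpoint_vsub_midpoint z z' y y'
    rw [hsub, ← add_div, mul_div_assoc']
    gcongr
    linarith [norm_midpoint_sq_le (z - y) (z' - y')]
  rw [moreauObjective, moreauObjective, moreauObjective]
  linarith

theorem bddBelow_range_moreauObjective (hconv : ConvexOn ℝ univ h) (hμ : 0 < μ) {x : E}
    (hx : BddBelow (range (moreauObjective h μ x))) (y : E) :
    BddBelow (range (moreauObjective h μ y)) := by
  obtain ⟨b, hb⟩ := hx
  refine ⟨2 * b - moreauObjective h μ (x - (y - x)) 0, forall_mem_range.2 fun z => ?_⟩
  have hmid := moreauObjective_midpoint_le hconv hμ (x + (y - x)) (x - (y - x)) z 0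
  rw [midpoint_add_sub, add_sub_cancel] at hmid
  linarith [hb (mem_range_self (midpoint ℝ z 0))]

theorem two_mul_moreauEnvelope_midpoint_le (hconv : ConvexOn ℝ univ h) (hμ : 0 < μ) {y y' : E}
    (hbdd : BddBelow (range (moreauObjective h μ (midpoint ℝ y y')))) :
    2 * moreauEnvelope h μ (midpoint ℝ y y') ≤ moreauEnvelope h μ y + moreauEnvelope h μ y' := by
  have hpair (z z' : E) :
      2 * moreauEnvelope h μ (midpoint ℝ y y') ≤
        moreauObjective h μ y z + moreauObjective h μ y' z' :=
    (mul_le_mul_of_nonneg_left (ciInf_le hbdd _) zero_le_two).trans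
      (moreauObjective_midpoint_le hconv hμ y y' z z')
  have hinf' (z : E) :
      2 * moreauEnvelope h μ (midpoint ℝ y y') - moreauObjective h μ y z ≤ moreauEnvelope h μ y' :=
    le_ciInf fun z' => by linarith [hpair z z']
  have hinf : 2 * moreauEnvelope h μ (midpoint ℝ y y') - moreauEnvelope h μ y' ≤
      moreauEnvelope h μ y :=
    le_ciInf fun z => by linarith [hinf' z]
  linarith

end

theorem moreau_envelope_hasGradientAt_general
    {E : Type*} [NormedAddCommGroup E] [InnerProductSpace ℝ E] [FiniteDimensional ℝ E]
    (h : E → ℝ) (hconv : ConvexOn ℝ Set.univ h)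
    (μ : ℝ) (hμ : 0 < μ) (x p : E)
    (hp : ∀ z : E, h p + ‖p - x‖ ^ 2 / (2 * μ) ≤ h z + ‖z - x‖ ^ 2 / (2 * μ)) :
    HasGradientAt (fun y : E => ⨅ z : E, (h z + ‖z - y‖ ^ 2 / (2 * μ)))
      (μ⁻¹ • (x - p)) x := by
  have hMx : moreauEnvelope h μ x = moreauObjective h μ x p := moreauEnvelope_eq_of_forall_le hp
  have hbdd : ∀ y, BddBelow (range (moreauObjective h μ y)) :=
    bddBelow_range_moreauObjective hconv hμ ⟨_, forall_mem_range.2 hp⟩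
  refine hasGradientAt_of_midpoint_convex_of_le_quadratic (f := moreauEnvelope h μ)
    (C := (2 * μ)⁻¹) (fun v => ?_) (fun v => ?_)
  · have hmid := two_mul_moreauEnvelope_midpoint_le hconv hμ (hbdd (midpoint ℝ (x + v) (x - v)))
    rwa [midpoint_add_sub] at hmid
  · calc moreauEnvelope h μ (x + v) ≤ moreauObjective h μ (x + v) p := ciInf_le (hbdd _) p
      _ = _ := by
        rw [moreauObjective_eq_add_inner hμ.ne' x, hMx, add_sub_cancel_left, div_eq_inv_mul]

/-- If `p` is a proximal point of `h` at `x` with parameter `μ`, then the Moreau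
envelope `M_h^μ` is differentiable at `x` with gradient `(x - p) / μ`. -/
theorem moreau_envelope_hasGradientAt
    {E : Type*} [NormedAddCommGroup E] [InnerProductSpace ℝ E] [FiniteDimensional ℝ E]
    (h : E → ℝ) (ℓh : ℝ≥0) (hconv : ConvexOn ℝ Set.univ h) (hlip : LipschitzWith ℓh h)
    (μ : ℝ) (hμ : 0 < μ) (x p : E)
    (hp : ∀ z : E, h p + ‖p - x‖ ^ 2 / (2 * μ) ≤ h z + ‖z - x‖ ^ 2 / (2 * μ)) :
    HasGradientAt (fun y : E => ⨅ z : E, (h z + ‖z - y‖ ^ 2 / (2 * μ)))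
      (μ⁻¹ • (x - p)) x :=
  moreau_envelope_hasGradientAt_general h hconv μ hμ x p hp
end

section
/- The gradient of the Moreau envelope is Lipschitz continuous with constant 1/μ: if p₁ is a proximal point of h at x₁ with parameter μ and p₂ is a proximal point of h at x₂ with parameter μ, then ‖(x₁ − p₁)/μ − (x₂ − p₂)/μ‖ ≤ (1/μ)·‖x₁ − x₂‖. -/
/-!
The optimality condition of the proximal problem says that `(x - p) / μ` is a subgradient of the
convex function `h` at `p = prox_{μh}(x)`. Adding the subgradient inequalities at two proximal
points gives monotonicity, `0 ≤ ⟪(x₁ - p₁) - (x₂ - p₂), p₁ - p₂⟫`, and for `u = x₁ - x₂`,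
`v = p₁ - p₂` this yields `‖u - v‖² = ‖u‖² - 2⟪u - v, v⟫ - ‖v‖² ≤ ‖u‖²`.
-/

open scoped NNReal RealInnerProductSpace

open Filter Topology in
theorem le_of_forall_mem_Ioc_le_add_mul {a b c : ℝ}
    (h : ∀ t ∈ Set.Ioc (0 : ℝ) 1, a ≤ b + t * c) : a ≤ b := by
  have hlim : Tendsto (fun t : ℝ => b + t * c) (𝓝[>] 0) (𝓝 b) := by
    have : Continuous fun t : ℝ => b + t * c := by fun_prop
    simpa using this.continuousWithinAt.tendsto (x := 0) (s := Set.Ioi 0)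
  exact ge_of_tendsto hlim (eventually_of_mem (Ioc_mem_nhdsGT one_pos) h)

theorem norm_sub_le_norm_of_inner_sub_nonneg {F : Type*} [NormedAddCommGroup F]
    [InnerProductSpace ℝ F] {u v : F} (huv : 0 ≤ ⟪u - v, v⟫) : ‖u - v‖ ≤ ‖u‖ := by
  have hu : ‖u‖ ^ 2 = ‖u - v‖ ^ 2 + 2 * ⟪u - v, v⟫ + ‖v‖ ^ 2 := by
    rw [← norm_add_sq_real, sub_add_cancel]
  exact (pow_le_pow_iff_left₀ (norm_nonneg _) (norm_nonneg _) two_ne_zero).1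
    (by nlinarith [sq_nonneg ‖v‖])

def IsProxPoint {E : Type*} [SeminormedAddCommGroup E] (h : E → ℝ) (μ : ℝ) (x p : E) : Prop :=
  ∀ z, h p + ‖p - x‖ ^ 2 / (2 * μ) ≤ h z + ‖z - x‖ ^ 2 / (2 * μ)

theorem IsProxPoint.sub_norm_sq_le {E : Type*} [SeminormedAddCommGroup E] {h : E → ℝ} {μ : ℝ}
    {x p : E} (hp : IsProxPoint h μ x p) (hμ : 0 < μ) (z : E) :
    ‖p - x‖ ^ 2 - ‖z - x‖ ^ 2 ≤ 2 * μ * (h z - h p) := by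
  rw [← div_le_iff₀' (by positivity), sub_div]
  linarith [hp z]

namespace IsProxPoint

variable {E : Type*} [NormedAddCommGroup E] [InnerProductSpace ℝ E] {h : E → ℝ} {μ : ℝ}

/-- Compare `p` with the points `p + t • (z - p)` of the segment towards `z` and let `t → 0⁺`. -/
theorem inner_le {x p : E} (hp : IsProxPoint h μ x p) (hconv : ConvexOn ℝ Set.univ h)
    (hμ : 0 < μ) (z : E) : ⟪x - p, z - p⟫ ≤ μ * (h z - h p) := by
  refine le_of_forall_mem_Ioc_le_add_mul (c := ‖z - p‖ ^ 2 / 2) fun t ⟨ht₀, ht₁⟩ => ?_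
  set w := p + t • (z - p)
  have hconvex : h w ≤ (1 - t) * h p + t * h z := by
    have := hconv.2 (Set.mem_univ p) (Set.mem_univ z) (sub_nonneg.2 ht₁) ht₀.le (by ring)
    rwa [show (1 - t) • p + t • z = w by module] at this
  have hnorm : ‖w - x‖ ^ 2 = ‖p - x‖ ^ 2 - 2 * t * ⟪x - p, z - p⟫ + t ^ 2 * ‖z - p‖ ^ 2 := by
    rw [add_sub_right_comm, norm_add_sq_real, real_inner_smul_right, norm_smul,
      Real.norm_of_nonneg ht₀.le, ← neg_sub x p, inner_neg_left]
    ring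
  have hstep : 2 * t * ⟪x - p, z - p⟫ - t ^ 2 * ‖z - p‖ ^ 2 ≤ 2 * t * (μ * (h z - h p)) :=
    calc 2 * t * ⟪x - p, z - p⟫ - t ^ 2 * ‖z - p‖ ^ 2 = ‖p - x‖ ^ 2 - ‖w - x‖ ^ 2 := by
          rw [hnorm]; ring
      _ ≤ 2 * μ * (h w - h p) := hp.sub_norm_sq_le hμ w
      _ ≤ 2 * μ * (t * (h z - h p)) := by gcongr; linarith
      _ = 2 * t * (μ * (h z - h p)) := by ring
  refine le_of_mul_le_mul_left (a := 2 * t) ?_ (by positivity)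
  linarith

theorem inner_sub_sub_nonneg {x₁ x₂ p₁ p₂ : E} (hp₁ : IsProxPoint h μ x₁ p₁)
    (hp₂ : IsProxPoint h μ x₂ p₂) (hconv : ConvexOn ℝ Set.univ h) (hμ : 0 < μ) :
    0 ≤ ⟪(x₁ - x₂) - (p₁ - p₂), p₁ - p₂⟫ := by
  have h₁ := hp₁.inner_le hconv hμ p₂
  have h₂ := hp₂.inner_le hconv hμ p₁
  rw [← neg_sub p₁ p₂, inner_neg_right] at h₁
  rw [show (x₁ - x₂) - (p₁ - p₂) = (x₁ - p₁) - (x₂ - p₂) by abel, inner_sub_left]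
  linarith

theorem norm_sub_sub_le {x₁ x₂ p₁ p₂ : E} (hp₁ : IsProxPoint h μ x₁ p₁)
    (hp₂ : IsProxPoint h μ x₂ p₂) (hconv : ConvexOn ℝ Set.univ h) (hμ : 0 < μ) :
    ‖(x₁ - p₁) - (x₂ - p₂)‖ ≤ ‖x₁ - x₂‖ := by
  rw [show (x₁ - p₁) - (x₂ - p₂) = (x₁ - x₂) - (p₁ - p₂) by abel]
  exact norm_sub_le_norm_of_inner_sub_nonneg (inner_sub_sub_nonneg hp₁ hp₂ hconv hμ)

end IsProxPoint

theorem moreau_envelope_gradient_lipschitz_general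
    {E : Type*} [NormedAddCommGroup E] [InnerProductSpace ℝ E]
    (h : E → ℝ) (hconv : ConvexOn ℝ Set.univ h)
    (μ : ℝ) (hμ : 0 < μ) (x₁ x₂ p₁ p₂ : E)
    (hp₁ : ∀ z : E, h p₁ + ‖p₁ - x₁‖ ^ 2 / (2 * μ) ≤ h z + ‖z - x₁‖ ^ 2 / (2 * μ))
    (hp₂ : ∀ z : E, h p₂ + ‖p₂ - x₂‖ ^ 2 / (2 * μ) ≤ h z + ‖z - x₂‖ ^ 2 / (2 * μ)) :
    ‖μ⁻¹ • (x₁ - p₁) - μ⁻¹ • (x₂ - p₂)‖ ≤ (1 / μ) * ‖x₁ - x₂‖ := by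
  rw [← smul_sub, norm_smul, norm_inv, Real.norm_of_nonneg hμ.le, one_div]
  gcongr
  exact IsProxPoint.norm_sub_sub_le hp₁ hp₂ hconv hμ

/-- The gradient of the Moreau envelope is `1/μ`-Lipschitz continuous. -/
theorem moreau_envelope_gradient_lipschitz
    {E : Type*} [NormedAddCommGroup E] [InnerProductSpace ℝ E] [FiniteDimensional ℝ E]
    (h : E → ℝ) (ℓh : ℝ≥0) (hconv : ConvexOn ℝ Set.univ h) (hlip : LipschitzWith ℓh h)
    (μ : ℝ) (hμ : 0 < μ) (x₁ x₂ p₁ p₂ : E)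
    (hp₁ : ∀ z : E, h p₁ + ‖p₁ - x₁‖ ^ 2 / (2 * μ) ≤ h z + ‖z - x₁‖ ^ 2 / (2 * μ))
    (hp₂ : ∀ z : E, h p₂ + ‖p₂ - x₂‖ ^ 2 / (2 * μ) ≤ h z + ‖z - x₂‖ ^ 2 / (2 * μ)) :
    ‖μ⁻¹ • (x₁ - p₁) - μ⁻¹ • (x₂ - p₂)‖ ≤ (1 / μ) * ‖x₁ - x₂‖ :=
  moreau_envelope_gradient_lipschitz_general h hconv μ hμ x₁ x₂ p₁ p₂ hp₁ hp₂
end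

section
/- Let f : E → ℝ be differentiable and define ψ(x) = f(x) + M_h^{1/σ}(A x − z/σ). Then ψ is differentiable at every x ∈ E with gradient ∇ψ(x) = ∇f(x) + σ·A*(A x − z/σ − p(x)), where A* is the adjoint of A and p(x) is the proximal point of h at A x − z/σ with parameter 1/σ. -/
open scoped NNReal RealInnerProductSpace

section Helpers
variable {F : Type*} [NormedAddCommGroup F] [InnerProductSpace ℝ F]

private lemma aux_par0 (x y : F) : ‖((1:ℝ)/2)•x + ((1:ℝ)/2)•y‖^2
    = (1/2)*‖x‖^2 + (1/2)*‖y‖^2 - (1/4)*‖x-y‖^2 := by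
  rw [norm_add_sq_real, norm_sub_sq_real, norm_smul, norm_smul, real_inner_smul_left,
    real_inner_smul_right]
  have hn : ‖(1/2 : ℝ)‖ = 1/2 := by norm_num
  rw [hn]; ring

private lemma aux_par (a b u : F) : ‖((1:ℝ)/2) • a + ((1:ℝ)/2) • b - u‖^2
      = (1/2)*‖a-u‖^2 + (1/2)*‖b-u‖^2 - (1/4)*‖a-b‖^2 := by
  have e : ((1:ℝ)/2) • a + ((1:ℝ)/2) • b - u = ((1:ℝ)/2) • (a-u) + ((1:ℝ)/2) • (b-u) := by
    module
  have e2 : a - b = (a-u) - (b-u) := by abel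
  rw [e, e2, aux_par0]

private lemma aux_shift (a u v : F) : ‖a - v‖^2 = ‖a - u‖^2 - 2*⟪a-u, v-u⟫ + ‖v-u‖^2 := by
  have e : a - v = (a-u) - (v-u) := by abel
  rw [e, norm_sub_sq_real]

end Helpers

set_option maxHeartbeats 1000000 in
/-- The augmented Lagrangian `ψ(x) = f(x) + M_h^{1/σ}(Ax - z/σ)` is differentiable with
gradient `∇ψ(x) = ∇f(x) + σ A*(Ax - z/σ - p(x))`, where `p(x)` is the proximal point of `h`
at `Ax - z/σ` with parameter `1/σ`. -/
theorem augmented_lagrangian_hasGradientAt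
    {E F : Type*} [NormedAddCommGroup E] [InnerProductSpace ℝ E] [FiniteDimensional ℝ E]
    [NormedAddCommGroup F] [InnerProductSpace ℝ F] [FiniteDimensional ℝ F]
    (A : E →L[ℝ] F) (h : F → ℝ) (ℓh : ℝ≥0)
    (hconv : ConvexOn ℝ Set.univ h) (hlip : LipschitzWith ℓh h)
    (σ : ℝ) (hσ : 0 < σ) (z : F)
    (p : E → F)
    (hp : ∀ x : E, ∀ w : F,
      h (p x) + (σ / 2) * ‖p x - (A x - σ⁻¹ • z)‖ ^ 2
        ≤ h w + (σ / 2) * ‖w - (A x - σ⁻¹ • z)‖ ^ 2)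
    (f : E → ℝ) (f' : E → E) (hf : ∀ x : E, HasGradientAt f (f' x) x) :
    ∀ x : E, HasGradientAt
      (fun u : E => f u + ⨅ w : F, (h w + (σ / 2) * ‖w - (A u - σ⁻¹ • z)‖ ^ 2))
      (f' x + σ • (ContinuousLinearMap.adjoint A) (A x - σ⁻¹ • z - p x)) x := by
  intro x
  set c : F := σ⁻¹ • z with hc
  set g : E → F → ℝ := fun t w => h w + (σ / 2) * ‖w - (A t - c)‖ ^ 2 with hg
  set φ : E → ℝ := fun t => ⨅ w : F, g t w with hφ
  -- the infimum is attained at p t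
  have hbdd : ∀ t : E, BddBelow (Set.range (g t)) := fun t =>
    ⟨g t (p t), by rintro _ ⟨w, rfl⟩; exact hp t w⟩
  have key : ∀ t : E, φ t = g t (p t) := fun t =>
    le_antisymm (ciInf_le (hbdd t) (p t)) (le_ciInf (hp t))
  -- quadratic growth of the prox objective
  have growth : ∀ t : E, ∀ w : F,
      g t (p t) + (σ/4) * ‖w - p t‖^2 ≤ g t w := by
    intro t w
    have hm := hp t (((1:ℝ)/2) • (p t) + ((1:ℝ)/2) • w)
    have hmid : h (((1:ℝ)/2) • (p t) + ((1:ℝ)/2) • w) ≤ (1/2) * h (p t) + (1/2) * h w := by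
      have := hconv.2 (Set.mem_univ (p t)) (Set.mem_univ w)
        (by norm_num : (0:ℝ) ≤ 1/2) (by norm_num : (0:ℝ) ≤ 1/2) (by norm_num)
      simpa [smul_eq_mul] using this
    rw [aux_par (p t) w (A t - c)] at hm
    have hDrev : ‖p t - w‖^2 = ‖w - p t‖^2 := by rw [norm_sub_rev]
    rw [hDrev] at hm
    simp only [hg]
    nlinarith [hm, hmid, norm_nonneg (w - p t), sq_nonneg ‖w - p t‖]
  -- prox is 2-Lipschitz along A
  have lip : ∀ s t : E, ‖p s - p t‖ ≤ 2 * ‖A s - A t‖ := by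
    intro s t
    have h1 := growth t (p s)
    have h2 := growth s (p t)
    -- expand the cross norms
    have e1 : ‖p s - (A t - c)‖^2
        = ‖p s - (A s - c)‖^2 - 2*⟪p s - (A s - c), (A t - c) - (A s - c)⟫
          + ‖(A t - c) - (A s - c)‖^2 := aux_shift _ _ _
    have e2 : ‖p t - (A s - c)‖^2
        = ‖p t - (A t - c)‖^2 - 2*⟪p t - (A t - c), (A s - c) - (A t - c)⟫
          + ‖(A s - c) - (A t - c)‖^2 := aux_shift _ _ _
    have ed : (A t - c) - (A s - c) = A t - A s := by abel
    have ed' : (A s - c) - (A t - c) = A s - A t := by abel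
    rw [ed] at e1; rw [ed'] at e2
    have hnrev : ‖A s - A t‖ = ‖A t - A s‖ := norm_sub_rev _ _
    have hinner : ⟪p t - (A t - c), A s - A t⟫
        = - ⟪p t - (A t - c), A t - A s⟫ := by
      have : A s - A t = -(A t - A s) := by abel
      rw [this, inner_neg_right]
    have hsplit : ⟪p t - (A t - c), A t - A s⟫
        = ⟪p t - p s, A t - A s⟫ + ⟪p s - (A s - c), A t - A s⟫
          - ⟪A t - A s, A t - A s⟫ := by
      have e : p t - (A t - c) = (p t - p s) + (p s - (A s - c)) - (A t - A s) := by abel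
      rw [e, inner_sub_left, inner_add_left]
    have hdd : ⟪A t - A s, A t - A s⟫ = ‖A t - A s‖^2 := real_inner_self_eq_norm_sq _
    have hrev2 : ‖p t - p s‖ = ‖p s - p t‖ := norm_sub_rev _ _
    -- combine: (1/2)‖ps-pt‖² ≤ ⟪pt-ps, At-As⟫
    have hkey : (1/2) * ‖p s - p t‖^2 ≤ ⟪p t - p s, A t - A s⟫ := by
      simp only [hg] at h1 h2
      rw [e1] at h1; rw [e2] at h2
      rw [hinner, hsplit, hdd] at h2
      have hrevsq : ‖p t - p s‖^2 = ‖p s - p t‖^2 := by rw [norm_sub_rev]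
      rw [hrevsq] at h2
      have hrevn : ‖A s - A t‖^2 = ‖A t - A s‖^2 := by rw [norm_sub_rev]
      rw [hrevn] at h2
      nlinarith [h1, h2]
    have hcs : ⟪p t - p s, A t - A s⟫ ≤ ‖p t - p s‖ * ‖A t - A s‖ := real_inner_le_norm _ _
    rw [hrev2] at hcs
    rw [hnrev]
    rcases (norm_nonneg (p s - p t)).eq_or_lt with h0 | h0
    · rw [← h0]; positivity
    · nlinarith [hkey, hcs, norm_nonneg (A t - A s)]
  -- gradient of f part
  have e1 : (fun y => f y - f x - ⟪f' x, y - x⟫) =o[nhds x] fun y => y - x :=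
    hasGradientAt_iff_isLittleO.mp (hf x)
  -- gradient of φ part
  set G : E := σ • (ContinuousLinearMap.adjoint A) (A x - c - p x) with hG
  have e2 : (fun y => φ y - φ x - ⟪G, y - x⟫) =o[nhds x] fun y => y - x := by
    rw [Asymptotics.isLittleO_iff]
    intro ε hε
    have hK : (0:ℝ) < 2 * σ * (‖A‖^2 + 1) := by positivity
    rw [Metric.eventually_nhds_iff]
    refine ⟨ε / (2 * σ * (‖A‖^2 + 1)), by positivity, fun y hy => ?_⟩
    rw [dist_eq_norm] at hy
    set d : F := A y - A x with hd
    have hGinner : ⟪G, y - x⟫ = σ * ⟪(A x - c) - p x, d⟫ := by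
      rw [hG, real_inner_smul_left, ContinuousLinearMap.adjoint_inner_left, map_sub]
    have hdsub : (A y - c) - (A x - c) = d := by rw [hd]; abel
    -- upper bound
    have hup : φ y - φ x ≤ σ * ⟪(A x - c) - p x, d⟫ + (σ/2) * ‖d‖^2 := by
      have h1 : φ y ≤ g y (p x) := ciInf_le (hbdd y) (p x)
      have h2 : φ x = g x (p x) := key x
      have e : ‖p x - (A y - c)‖^2
          = ‖p x - (A x - c)‖^2 - 2*⟪p x - (A x - c), (A y - c) - (A x - c)⟫
            + ‖(A y - c) - (A x - c)‖^2 := aux_shift _ _ _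
      rw [hdsub] at e
      have hneg : ⟪(A x - c) - p x, d⟫ = - ⟪p x - (A x - c), d⟫ := by
        have : (A x - c) - p x = -(p x - (A x - c)) := by abel
        rw [this, inner_neg_left]
      simp only [hg] at h1 h2
      rw [e] at h1
      rw [hneg]
      nlinarith [h1, h2]
    -- lower bound
    have hlow : σ * ⟪(A x - c) - p y, d⟫ + (σ/2) * ‖d‖^2 ≤ φ y - φ x := by
      have h1 : φ y = g y (p y) := key y
      have h2 : φ x ≤ g x (p y) := by rw [key x]; exact hp x (p y)
      have e : ‖p y - (A y - c)‖^2
          = ‖p y - (A x - c)‖^2 - 2*⟪p y - (A x - c), (A y - c) - (A x - c)⟫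
            + ‖(A y - c) - (A x - c)‖^2 := aux_shift _ _ _
      rw [hdsub] at e
      have hneg : ⟪(A x - c) - p y, d⟫ = - ⟪p y - (A x - c), d⟫ := by
        have : (A x - c) - p y = -(p y - (A x - c)) := by abel
        rw [this, inner_neg_left]
      simp only [hg] at h1 h2
      rw [e] at h1
      rw [hneg]
      nlinarith [h1, h2]
    -- difference of inner products
    have hdiff : ⟪(A x - c) - p y, d⟫ - ⟪(A x - c) - p x, d⟫ = ⟪p x - p y, d⟫ := by
      rw [← inner_sub_left]
      congr 1
      abel
    have hpl : ‖p x - p y‖ ≤ 2 * ‖d‖ := by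
      have := lip x y
      have hr : ‖A x - A y‖ = ‖d‖ := by rw [hd, norm_sub_rev]
      rwa [hr] at this
    have hcs : - (‖p x - p y‖ * ‖d‖) ≤ ⟪p x - p y, d⟫ := by
      have := abs_real_inner_le_norm (p x - p y) d
      have := neg_abs_le (⟪p x - p y, d⟫)
      nlinarith [abs_real_inner_le_norm (p x - p y) d, neg_abs_le (⟪p x - p y, d⟫)]
    have hderr : |φ y - φ x - ⟪G, y - x⟫| ≤ 2 * σ * ‖d‖^2 := by
      rw [hGinner]
      rw [abs_le]
      constructor
      · have hmain : σ * ⟪p x - p y, d⟫ + (σ/2) * ‖d‖^2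
            ≤ φ y - φ x - σ * ⟪(A x - c) - p x, d⟫ := by
          nlinarith [hlow, hdiff]
        have s1 : ‖p x - p y‖ * ‖d‖ ≤ 2*‖d‖*‖d‖ :=
          mul_le_mul_of_nonneg_right hpl (norm_nonneg d)
        have s2 : -(2*‖d‖*‖d‖) ≤ ⟪p x - p y, d⟫ := by linarith
        have s3 : σ * (-(2*‖d‖*‖d‖)) ≤ σ * ⟪p x - p y, d⟫ :=
          mul_le_mul_of_nonneg_left s2 hσ.le
        have s5 : σ * (-(2*‖d‖*‖d‖)) = -(2*σ*‖d‖^2) := by rw [sq]; ring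
        have h0 : (0:ℝ) ≤ (σ/2)*‖d‖^2 := by positivity
        linarith [hmain, s3, s5.symm.le, s5.le, h0]
      · nlinarith [hup, sq_nonneg ‖d‖]
    have hdn : ‖d‖ ≤ ‖A‖ * ‖y - x‖ := by
      rw [hd, ← map_sub]
      exact A.le_opNorm (y - x)
    have h6 : ‖d‖^2 ≤ (‖A‖^2+1)*‖y-x‖^2 := by
      have h7 : ‖d‖^2 ≤ (‖A‖*‖y-x‖)^2 := pow_le_pow_left₀ (norm_nonneg d) hdn 2
      nlinarith [sq_nonneg ‖y - x‖]
    have hbound : 2 * σ * ‖d‖^2 ≤ 2 * σ * (‖A‖^2 + 1) * ‖y - x‖^2 := by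
      calc 2 * σ * ‖d‖^2 ≤ 2*σ*((‖A‖^2+1)*‖y-x‖^2) :=
            mul_le_mul_of_nonneg_left h6 (by positivity : (0:ℝ) ≤ 2*σ)
        _ = 2 * σ * (‖A‖^2 + 1) * ‖y - x‖^2 := by ring
    rw [Real.norm_eq_abs]
    calc |φ y - φ x - ⟪G, y - x⟫| ≤ 2 * σ * ‖d‖^2 := hderr
      _ ≤ 2 * σ * (‖A‖^2 + 1) * ‖y - x‖^2 := hbound
      _ ≤ ε * ‖y - x‖ := by
          have h8 : ‖y - x‖ * (2 * σ * (‖A‖^2 + 1)) ≤ ε := (le_div_iff₀ hK).mp hy.le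
          have h9 := mul_le_mul_of_nonneg_right h8 (norm_nonneg (y - x))
          calc 2*σ*(‖A‖^2+1)*‖y-x‖^2 = ‖y-x‖*(2*σ*(‖A‖^2+1))*‖y-x‖ := by ring
            _ ≤ ε*‖y-x‖ := h9
  -- combine
  rw [hasGradientAt_iff_isLittleO]
  have := e1.add e2
  refine this.congr' (Filter.Eventually.of_forall fun y => ?_) (Filter.Eventually.of_forall fun y => rfl)
  simp only [inner_add_left]
  change f y - f x - ⟪f' x, y - x⟫ + (φ y - φ x - ⟪G, y - x⟫)
    = (f y + φ y) - (f x + φ x) - (⟪f' x, y - x⟫ + ⟪G, y - x⟫)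
  ring
end

section
/- Let F be a real normed space, β₀ ≥ 0, and r : ℕ → F a sequence. For l ≥ 1 set β_l = β₀·min( ‖r₀‖·(log 2)² / (‖r_l‖·l²·log(l+1)) , 1 ), and define z_k = −∑_{l=1}^{k} β_l · r_l. Then for every k ≥ 0, ‖z_k‖ ≤ (π²/6)·β₀·‖r₀‖. -/
/-!
Each term satisfies `‖β_l r_l‖ ≤ β₀ ‖r₀‖ (log 2)² / (l² log(l+1)) ≤ β₀ ‖r₀‖ / l²`: the factor
`‖r_l‖` cancels against the denominator of the step size, and `(log 2)² ≤ log 2 ≤ log(l+1)`.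
The triangle inequality and `∑ 1/l² = π²/6` then bound the dual iterate.
-/

open Finset

lemma min_div_mul_one_mul_le_div {a b c : ℝ} (ha : 0 ≤ a) (hb : 0 ≤ b) (hc : 0 ≤ c) :
    min (a / (b * c)) 1 * b ≤ a / c := by
  -- at `b = 0` the division yields `0`, so the left side vanishes
  rcases hb.eq_or_lt with rfl | hb
  · simpa using div_nonneg ha hc
  calc min (a / (b * c)) 1 * b ≤ a / (b * c) * b := by gcongr; exact min_le_left _ _
    _ = a / c := by field_simp

lemma sq_log_two_le_log_add_one {x : ℝ} (hx : 1 ≤ x) : Real.log 2 ^ 2 ≤ Real.log (x + 1) := by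
  have hlog2_pos : 0 < Real.log 2 := Real.log_pos one_lt_two
  have hlog2_lt_one : Real.log 2 < 1 := Real.log_two_lt_d9.trans (by norm_num)
  have hlog2_le : Real.log 2 ≤ Real.log (x + 1) := Real.log_le_log two_pos (by linarith)
  nlinarith

lemma sum_Icc_one_div_sq_le (k : ℕ) : ∑ l ∈ Icc 1 k, 1 / (l : ℝ) ^ 2 ≤ Real.pi ^ 2 / 6 :=
  sum_le_hasSum _ (fun _ _ => by positivity) hasSum_zeta_two

section DualStep

variable {F : Type*} [NormedAddCommGroup F] [NormedSpace ℝ F]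

/-- The dual step size `β_l` of ManIAL. -/
noncomputable def dualStepSize (β₀ : ℝ) (r : ℕ → F) (l : ℕ) : ℝ :=
  β₀ * min (‖r 0‖ * Real.log 2 ^ 2 / (‖r l‖ * (l : ℝ) ^ 2 * Real.log ((l : ℝ) + 1))) 1

lemma norm_dualStepSize_smul_le {β₀ : ℝ} (hβ₀ : 0 ≤ β₀) (r : ℕ → F) {l : ℕ} (hl : 1 ≤ l) :
    ‖dualStepSize β₀ r l • r l‖ ≤ β₀ * ‖r 0‖ * (1 / (l : ℝ) ^ 2) := by
  have hl' : (1 : ℝ) ≤ l := by exact_mod_cast hl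
  have hlog_pos : 0 < Real.log ((l : ℝ) + 1) := Real.log_pos (by linarith)
  have hstep_nonneg : 0 ≤ dualStepSize β₀ r l :=
    mul_nonneg hβ₀ (le_min (by positivity) zero_le_one)
  have hmin := min_div_mul_one_mul_le_div (a := ‖r 0‖ * Real.log 2 ^ 2) (b := ‖r l‖)
    (c := (l : ℝ) ^ 2 * Real.log ((l : ℝ) + 1)) (by positivity) (norm_nonneg _) (by positivity)
  rw [← mul_assoc] at hmin
  have hratio : ‖r 0‖ * Real.log 2 ^ 2 / ((l : ℝ) ^ 2 * Real.log ((l : ℝ) + 1))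
      ≤ ‖r 0‖ * (1 / (l : ℝ) ^ 2) :=
    calc ‖r 0‖ * Real.log 2 ^ 2 / ((l : ℝ) ^ 2 * Real.log ((l : ℝ) + 1))
        = ‖r 0‖ * (Real.log 2 ^ 2 / Real.log ((l : ℝ) + 1)) * (1 / (l : ℝ) ^ 2) := by
          field_simp
      _ ≤ ‖r 0‖ * 1 * (1 / (l : ℝ) ^ 2) := by
          gcongr
          exact (div_le_one hlog_pos).mpr (sq_log_two_le_log_add_one hl')
      _ = ‖r 0‖ * (1 / (l : ℝ) ^ 2) := by rw [mul_one]
  rw [norm_smul, Real.norm_of_nonneg hstep_nonneg, dualStepSize, mul_assoc, mul_assoc β₀ ‖r 0‖]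
  exact mul_le_mul_of_nonneg_left (hmin.trans hratio) hβ₀

end DualStep

/-- Boundedness of the dual iterates of ManIAL: with the dual step sizes
`β_l = β₀ min(‖r₀‖ (log 2)² / (‖r_l‖ l² log(l+1)), 1)` and `z_k = -∑_{l=1}^k β_l r_l`,
one has `‖z_k‖ ≤ (π²/6) β₀ ‖r₀‖` for every `k`. -/
theorem dual_iterates_bounded
    {F : Type*} [NormedAddCommGroup F] [NormedSpace ℝ F]
    (β₀ : ℝ) (hβ₀ : 0 ≤ β₀) (r : ℕ → F) :
    ∀ k : ℕ,
      ‖-(∑ l ∈ Finset.Icc 1 k,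
          (β₀ * min (‖r 0‖ * Real.log 2 ^ 2 /
              (‖r l‖ * (l : ℝ) ^ 2 * Real.log ((l : ℝ) + 1))) 1) • r l)‖
        ≤ Real.pi ^ 2 / 6 * β₀ * ‖r 0‖ := by
  intro k
  change ‖-(∑ l ∈ Icc 1 k, dualStepSize β₀ r l • r l)‖ ≤ _
  calc ‖-(∑ l ∈ Icc 1 k, dualStepSize β₀ r l • r l)‖
      ≤ ∑ l ∈ Icc 1 k, β₀ * ‖r 0‖ * (1 / (l : ℝ) ^ 2) := by
        rw [norm_neg]
        exact norm_sum_le_of_le _ fun l hl => norm_dualStepSize_smul_le hβ₀ r (mem_Icc.mp hl).1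
    _ = β₀ * ‖r 0‖ * ∑ l ∈ Icc 1 k, 1 / (l : ℝ) ^ 2 := (mul_sum _ _ _).symm
    _ ≤ β₀ * ‖r 0‖ * (Real.pi ^ 2 / 6) := by gcongr; exact sum_Icc_one_div_sq_le k
    _ = Real.pi ^ 2 / 6 * β₀ * ‖r 0‖ := by ring
end

section
/- Let E be a real finite-dimensional inner product space, L > 0, and ψ : E → ℝ differentiable with ψ(y) ≤ ψ(x) + ⟪∇ψ(x), y − x⟫ + (L/2)‖y − x‖² for all x, y ∈ E, and bounded below by ψ_min. Define the gradient descent iterates x_{t+1} = x_t − (1/L)·∇ψ(x_t) starting from x₀. Then for every integer T ≥ 1, min_{0 ≤ t < T} ‖∇ψ(x_t)‖ ≤ √(2L(ψ(x₀) − ψ_min)) / √T. -/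
/-! The quadratic upper bound at `y = x - (1/L) ∇ψ(x)` shows that each step decreases `ψ` by at
least `‖∇ψ(x_t)‖² / (2L)`. Telescoping, the first `T` decreases sum to at most
`ψ(x₀) - ψ_min`, so the smallest of the `T` gradient norms squared is at most
`2L(ψ(x₀) - ψ_min) / T`. -/

open scoped NNReal RealInnerProductSpace

open Finset

theorem Finset.exists_card_nsmul_le_sum {ι M : Type*} [AddCommMonoid M] [LinearOrder M]
    [IsOrderedAddMonoid M] {s : Finset ι} (hs : s.Nonempty) (f : ι → M) :
    ∃ i ∈ s, #s • f i ≤ ∑ j ∈ s, f j := by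
  obtain ⟨i, hi, hmin⟩ := s.exists_min_image f hs
  exact ⟨i, hi, s.card_nsmul_le_sum f (f i) hmin⟩

theorem sum_range_le_sub_of_le_sub {a b : ℕ → ℝ} (h : ∀ t, a (t + 1) ≤ a t - b t) (n : ℕ) :
    ∑ t ∈ range n, b t ≤ a 0 - a n := by
  rw [← sum_range_sub']
  exact sum_le_sum fun t _ => by linarith [h t]

section GradientStep

variable {E : Type*} [NormedAddCommGroup E] [InnerProductSpace ℝ E]

theorem le_sub_sq_norm_div_of_quadratic_upper_bound {L : ℝ} (hL : L ≠ 0) {ψ : E → ℝ} {x g : E}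
    (hsmooth : ∀ y, ψ y ≤ ψ x + ⟪g, y - x⟫ + (L / 2) * ‖y - x‖ ^ 2) :
    ψ (x - (1 / L) • g) ≤ ψ x - ‖g‖ ^ 2 / (2 * L) := by
  have hstep : x - (1 / L) • g - x = -((1 / L) • g) := by abel
  have hinner : ⟪g, -((1 / L) • g)⟫ = -(1 / L) * ‖g‖ ^ 2 := by
    rw [inner_neg_right, inner_smul_right, real_inner_self_eq_norm_sq]
    ring
  have hnorm : ‖-((1 / L) • g)‖ ^ 2 = (1 / L) ^ 2 * ‖g‖ ^ 2 := by
    rw [norm_neg, norm_smul, mul_pow, Real.norm_eq_abs, sq_abs]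
  calc ψ (x - (1 / L) • g)
      ≤ ψ x + -(1 / L) * ‖g‖ ^ 2 + L / 2 * ((1 / L) ^ 2 * ‖g‖ ^ 2) := by
        simpa only [hstep, hinner, hnorm] using hsmooth (x - (1 / L) • g)
    _ = ψ x - ‖g‖ ^ 2 / (2 * L) := by field_simp; ring

end GradientStep

theorem gradient_descent_complexity_general
    {E : Type*} [NormedAddCommGroup E] [InnerProductSpace ℝ E]
    (L : ℝ) (hL : 0 < L) (ψ : E → ℝ) (ψ' : E → E)
    (hsmooth : ∀ x y : E, ψ y ≤ ψ x + ⟪ψ' x, y - x⟫ + (L / 2) * ‖y - x‖ ^ 2)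
    (ψmin : ℝ) (hbdd : ∀ x : E, ψmin ≤ ψ x)
    (x : ℕ → E) (hx : ∀ t : ℕ, x (t + 1) = x t - (1 / L) • ψ' (x t)) :
    ∀ T : ℕ, 1 ≤ T →
      ∃ t < T, ‖ψ' (x t)‖ ≤ Real.sqrt (2 * L * (ψ (x 0) - ψmin)) / Real.sqrt T := by
  intro T hT
  have hdescent : ∀ t, ψ (x (t + 1)) ≤ ψ (x t) - ‖ψ' (x t)‖ ^ 2 / (2 * L) := fun t => by
    rw [hx t]
    exact le_sub_sq_norm_div_of_quadratic_upper_bound hL.ne' (hsmooth (x t))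
  have hsum : ∑ t ∈ range T, ‖ψ' (x t)‖ ^ 2 / (2 * L) ≤ ψ (x 0) - ψmin :=
    (sum_range_le_sub_of_le_sub (a := fun t => ψ (x t)) hdescent T).trans
      (by linarith [hbdd (x T)])
  obtain ⟨t, ht, hmin⟩ := exists_card_nsmul_le_sum ⟨0, mem_range.2 hT⟩
    fun t => ‖ψ' (x t)‖ ^ 2 / (2 * L)
  rw [card_range, nsmul_eq_mul] at hmin
  have hTpos : (0 : ℝ) < T := by exact_mod_cast hT
  refine ⟨t, mem_range.1 ht, ?_⟩
  rw [← Real.sqrt_div' _ hTpos.le]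
  refine Real.le_sqrt_of_sq_le ((le_div_iff₀ hTpos).2 ?_)
  have hkey := hmin.trans hsum
  rw [mul_div_assoc', div_le_iff₀ (by positivity)] at hkey
  linarith

/-- Iteration complexity of gradient descent with constant step size `1/L` on an
`L`-smooth function bounded below: after `T ≥ 1` steps, some iterate `x_t` with `t < T`
satisfies `‖∇ψ(x_t)‖ ≤ √(2L(ψ(x₀) - ψ_min))/√T`. -/
theorem gradient_descent_complexity
    {E : Type*} [NormedAddCommGroup E] [InnerProductSpace ℝ E] [FiniteDimensional ℝ E]
    (L : ℝ) (hL : 0 < L) (ψ : E → ℝ) (ψ' : E → E)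
    (hgrad : ∀ x : E, HasGradientAt ψ (ψ' x) x)
    (hsmooth : ∀ x y : E, ψ y ≤ ψ x + ⟪ψ' x, y - x⟫ + (L / 2) * ‖y - x‖ ^ 2)
    (ψmin : ℝ) (hbdd : ∀ x : E, ψmin ≤ ψ x)
    (x : ℕ → E) (hx : ∀ t : ℕ, x (t + 1) = x t - (1 / L) • ψ' (x t)) :
    ∀ T : ℕ, 1 ≤ T →
      ∃ t < T, ‖ψ' (x t)‖ ≤ Real.sqrt (2 * L * (ψ (x 0) - ψmin)) / Real.sqrt T :=
  gradient_descent_complexity_general L hL ψ ψ' hsmooth ψmin hbdd x hx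
end

section
/- Let κ > 0, G ≥ 0, w > 0 with w ≥ 2G², and let g : ℕ → ℝ satisfy g_i² ≤ G² for all i ≥ 1. Define η_s = κ / (w + ∑_{i=1}^{s} g_i²)^{1/3} for s ≥ 0. Then for every t ≥ 1, 1/η_t − 1/η_{t−1} ≤ (2^{2/3}·G² / (3κ³))·η_t². -/
/-!
Write `a = A^{1/3}` and `b = B^{1/3}` for the bases `A = w + ∑_{i=1}^{t-1} g_i²` and `B = A + g_t²` of
`η_{t-1}` and `η_t`, so that `1/η_t - 1/η_{t-1} = (b - a)/κ` and `η_t² = κ²/b²`.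
Factoring `b³ - a³ = (b - a)(a² + ab + b²) ≥ 3a²(b - a)` gives the tangent-line bound
`b - a ≤ (B - A)/(3a²)`, and `w ≥ 2G²` forces `B ≤ 2A`, hence `b ≤ 2^{1/3} a`, which lets
`a²` be traded for `b²` at the price of the factor `2^{2/3}`.
-/

lemma three_mul_sq_mul_sub_le_of_le_mul {a b c : ℝ} (ha : 0 ≤ a) (hab : a ≤ b) (hbc : b ≤ c * a) :
    3 * b ^ 2 * (b - a) ≤ c ^ 2 * (b ^ 3 - a ^ 3) := by
  have h_tangent : 3 * a ^ 2 * (b - a) ≤ b ^ 3 - a ^ 3 := by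
    nlinarith [mul_nonneg (sq_nonneg (b - a)) (by linarith : 0 ≤ b + 2 * a)]
  have hb_sq : b ^ 2 ≤ c ^ 2 * a ^ 2 := by
    rw [← mul_pow]; exact pow_le_pow_left₀ (ha.trans hab) hbc 2
  nlinarith [mul_le_mul_of_nonneg_right hb_sq (sub_nonneg.2 hab)]

lemma rpow_one_div_three_pow_three {x : ℝ} (hx : 0 ≤ x) : (x ^ ((1 : ℝ) / 3)) ^ 3 = x := by
  rw [one_div]; exact_mod_cast Real.rpow_inv_natCast_pow hx three_ne_zero

lemma rpow_one_div_three_sub_le {A B : ℝ} (hA : 0 ≤ A) (hAB : A ≤ B) (hB : B ≤ 2 * A) :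
    3 * (B ^ ((1 : ℝ) / 3)) ^ 2 * (B ^ ((1 : ℝ) / 3) - A ^ ((1 : ℝ) / 3))
      ≤ (2 : ℝ) ^ ((2 : ℝ) / 3) * (B - A) := by
  have hc_sq : ((2 : ℝ) ^ ((1 : ℝ) / 3)) ^ 2 = (2 : ℝ) ^ ((2 : ℝ) / 3) := by
    rw [← Real.rpow_mul_natCast zero_le_two]; norm_num
  have hab : A ^ ((1 : ℝ) / 3) ≤ B ^ ((1 : ℝ) / 3) := Real.rpow_le_rpow hA hAB (by norm_num)
  have hbc : B ^ ((1 : ℝ) / 3) ≤ (2 : ℝ) ^ ((1 : ℝ) / 3) * A ^ ((1 : ℝ) / 3) := by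
    rw [← Real.mul_rpow zero_le_two hA]; exact Real.rpow_le_rpow (hA.trans hAB) hB (by norm_num)
  have := three_mul_sq_mul_sub_le_of_le_mul (by positivity) hab hbc
  rwa [hc_sq, rpow_one_div_three_pow_three hA, rpow_one_div_three_pow_three (hA.trans hAB)] at this

lemma inv_stepsize_sub_le {κ A B D : ℝ} (hκ : 0 < κ) (hA : 0 < A) (hAB : A ≤ B)
    (hB : B ≤ 2 * A) (hBA : B - A ≤ D) :
    1 / (κ / B ^ ((1 : ℝ) / 3)) - 1 / (κ / A ^ ((1 : ℝ) / 3))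
      ≤ (2 : ℝ) ^ ((2 : ℝ) / 3) * D / (3 * κ ^ 3) * (κ / B ^ ((1 : ℝ) / 3)) ^ 2 := by
  have hb : 0 < B ^ ((1 : ℝ) / 3) := Real.rpow_pos_of_pos (hA.trans_le hAB) _
  have hrhs : (2 : ℝ) ^ ((2 : ℝ) / 3) * D / (3 * κ ^ 3) * (κ / B ^ ((1 : ℝ) / 3)) ^ 2
      = (2 : ℝ) ^ ((2 : ℝ) / 3) * D / (3 * (B ^ ((1 : ℝ) / 3)) ^ 2) / κ := by
    field_simp
  rw [one_div_div, one_div_div, ← sub_div, hrhs]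
  gcongr
  rw [le_div_iff₀ (by positivity), mul_comm]
  calc 3 * (B ^ ((1 : ℝ) / 3)) ^ 2 * (B ^ ((1 : ℝ) / 3) - A ^ ((1 : ℝ) / 3))
      ≤ (2 : ℝ) ^ ((2 : ℝ) / 3) * (B - A) := rpow_one_div_three_sub_le hA.le hAB hB
    _ ≤ (2 : ℝ) ^ ((2 : ℝ) / 3) * D := by gcongr

theorem rstorm_stepsize_difference_bound_general
    (κ G w : ℝ) (hκ : 0 < κ) (hw : 0 < w) (hwG : 2 * G ^ 2 ≤ w)
    (g : ℕ → ℝ) (hg : ∀ i : ℕ, 1 ≤ i → g i ^ 2 ≤ G ^ 2)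
    (η : ℕ → ℝ)
    (hη : ∀ s : ℕ, η s = κ / (w + ∑ i ∈ Finset.Icc 1 s, g i ^ 2) ^ ((1 : ℝ) / 3)) :
    ∀ t : ℕ, 1 ≤ t →
      1 / η t - 1 / η (t - 1) ≤ (2 : ℝ) ^ ((2 : ℝ) / 3) * G ^ 2 / (3 * κ ^ 3) * η t ^ 2 := by
  rintro t ht
  obtain ⟨s, rfl⟩ : ∃ s, t = s + 1 := ⟨t - 1, by omega⟩
  have hsum : 0 ≤ ∑ i ∈ Finset.Icc 1 s, g i ^ 2 := Finset.sum_nonneg fun i _ => sq_nonneg _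
  have hstep : w + ∑ i ∈ Finset.Icc 1 (s + 1), g i ^ 2
      = (w + ∑ i ∈ Finset.Icc 1 s, g i ^ 2) + g (s + 1) ^ 2 := by
    rw [Finset.sum_Icc_succ_top (by omega)]; ring
  have hgs : g (s + 1) ^ 2 ≤ G ^ 2 := hg _ (by omega)
  rw [Nat.add_sub_cancel, hη, hη, hstep]
  exact inv_stepsize_sub_le hκ (by linarith) (by linarith [sq_nonneg (g (s + 1))])
    (by linarith) (by linarith)

/-- Step-size difference bound for the adaptive step sizes of RStorm:
with `η_s = κ/(w + ∑_{i=1}^s g_i²)^{1/3}` one has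
`1/η_t - 1/η_{t-1} ≤ (2^{2/3} G²/(3κ³)) η_t²` for all `t ≥ 1`. -/
theorem rstorm_stepsize_difference_bound
    (κ G w : ℝ) (hκ : 0 < κ) (hG : 0 ≤ G) (hw : 0 < w) (hwG : 2 * G ^ 2 ≤ w)
    (g : ℕ → ℝ) (hg : ∀ i : ℕ, 1 ≤ i → g i ^ 2 ≤ G ^ 2)
    (η : ℕ → ℝ)
    (hη : ∀ s : ℕ, η s = κ / (w + ∑ i ∈ Finset.Icc 1 s, g i ^ 2) ^ ((1 : ℝ) / 3)) :
    ∀ t : ℕ, 1 ≤ t →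
      1 / η t - 1 / η (t - 1) ≤ (2 : ℝ) ^ ((2 : ℝ) / 3) * G ^ 2 / (3 * κ ^ 3) * η t ^ 2 :=
  rstorm_stepsize_difference_bound_general κ G w hκ hw hwG g hg η hη
end

section
/- Let Ḡ > 0, w ≥ 2Ḡ², and let G : ℕ → ℝ satisfy 0 ≤ G_t ≤ Ḡ for all t ≥ 1. Then for every integer T ≥ 1, ∑_{t=1}^{T} G_{t+1}² / (w + ∑_{i=1}^{t} G_i²) ≤ log(T + 2). -/
/-! The term `G_{t+1}² / (w + ∑_{i ≤ t} G_i²)` is at most `G_{t+1}² / (w/2 + ∑_{2 ≤ i ≤ t+1} G_i²)`,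
because `G_{t+1}² ≤ Ḡ² ≤ w/2`. The new denominators are the partial sums of `w/2 + ∑ G_i²`, and
`x / (c + S + x) ≤ log (c + S + x) - log (c + S)`, so the sum telescopes to
`log ((w/2 + ∑_{i=2}^{T+1} G_i²) / (w/2)) ≤ log (1 + T)`. -/

open Finset Real

lemma Real.sub_div_le_log_sub_log {a b : ℝ} (ha : 0 < a) (hb : 0 < b) :
    (b - a) / b ≤ log b - log a := by
  have h := one_sub_inv_le_log_of_pos (div_pos hb ha)
  rw [inv_div, log_div hb.ne' ha.ne'] at h
  rwa [sub_div, div_self hb.ne']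

lemma sum_div_partialSum_le_log {c : ℝ} (hc : 0 < c) {a : ℕ → ℝ} (ha : ∀ t, 0 ≤ a t) (n : ℕ) :
    ∑ t ∈ range n, a t / (c + ∑ s ∈ range (t + 1), a s)
      ≤ log (c + ∑ t ∈ range n, a t) - log c := by
  set P : ℕ → ℝ := fun t => c + ∑ s ∈ range t, a s with hP
  have hP_pos (t : ℕ) : 0 < P t := add_pos_of_pos_of_nonneg hc (sum_nonneg fun s _ => ha s)
  calc ∑ t ∈ range n, a t / P (t + 1)
      = ∑ t ∈ range n, (P (t + 1) - P t) / P (t + 1) := by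
        refine sum_congr rfl fun t _ => ?_
        simp only [hP, sum_range_succ]
        ring_nf
    _ ≤ ∑ t ∈ range n, (log (P (t + 1)) - log (P t)) :=
        sum_le_sum fun t _ => sub_div_le_log_sub_log (hP_pos t) (hP_pos (t + 1))
    _ = log (P n) - log c := by rw [sum_range_sub (fun t => log (P t))]; simp [hP]

lemma sum_Icc_one_eq_sum_range (f : ℕ → ℝ) (n : ℕ) :
    ∑ i ∈ Icc 1 n, f i = ∑ i ∈ range n, f (i + 1) := by
  induction n with
  | zero => simp
  | succ n ih => rw [sum_Icc_succ_top (by omega), ih, sum_range_succ]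

/-- Logarithmic bound on the cumulative normalized squared gradient-norm sum arising in
the analysis of the RStorm adaptive step sizes. -/
theorem rstorm_log_sum_bound
    (Gbar w : ℝ) (hGbar : 0 < Gbar) (hw : 2 * Gbar ^ 2 ≤ w)
    (G : ℕ → ℝ) (hG : ∀ t : ℕ, 1 ≤ t → 0 ≤ G t ∧ G t ≤ Gbar) :
    ∀ T : ℕ, 1 ≤ T →
      (∑ t ∈ Finset.Icc 1 T, G (t + 1) ^ 2 / (w + ∑ i ∈ Finset.Icc 1 t, G i ^ 2))
        ≤ Real.log ((T : ℝ) + 2) := by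
  intro T _
  have hc : 0 < w / 2 := by nlinarith
  have hG_sq (i : ℕ) (hi : 1 ≤ i) : G i ^ 2 ≤ w / 2 := by
    obtain ⟨h0, hle⟩ := hG i hi
    nlinarith
  have h_denom (t : ℕ) :
      w / 2 + ∑ s ∈ range (t + 1), G (s + 2) ^ 2 ≤ w + ∑ i ∈ range (t + 1), G (i + 1) ^ 2 := by
    rw [sum_range_succ, sum_range_succ' (fun i => G (i + 1) ^ 2)]
    linarith [hG_sq (t + 2) (by omega), sq_nonneg (G 1)]
  have h_total : ∑ s ∈ range T, G (s + 2) ^ 2 ≤ T * (w / 2) := by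
    simpa using sum_le_sum fun s (_ : s ∈ range T) => hG_sq (s + 2) (by omega)
  simp only [sum_Icc_one_eq_sum_range]
  calc ∑ t ∈ range T, G (t + 1 + 1) ^ 2 / (w + ∑ i ∈ range (t + 1), G (i + 1) ^ 2)
      ≤ ∑ t ∈ range T, G (t + 2) ^ 2 / (w / 2 + ∑ s ∈ range (t + 1), G (s + 2) ^ 2) :=
        sum_le_sum fun t _ => div_le_div_of_nonneg_left (sq_nonneg _)
          (add_pos_of_pos_of_nonneg hc (sum_nonneg fun _ _ => sq_nonneg _)) (h_denom t)
    _ ≤ log (w / 2 + ∑ s ∈ range T, G (s + 2) ^ 2) - log (w / 2) :=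
        sum_div_partialSum_le_log hc (fun _ => sq_nonneg _) T
    _ ≤ log (w / 2 * ((T : ℝ) + 2)) - log (w / 2) := by
        gcongr
        nlinarith
    _ = log ((T : ℝ) + 2) := by rw [log_mul hc.ne' (by positivity)]; ring
end

section
/- Let ψ : E → ℝ be differentiable with L-Lipschitz gradient, and let x, y, u ∈ E and constants α, β ≥ 0, G ≥ 0 satisfy ‖y − x‖ ≤ α‖u‖, ‖y − x − u‖ ≤ β‖u‖², and ‖∇ψ(x)‖ ≤ G. Then ψ(y) ≤ ψ(x) + ⟪∇ψ(x), u⟫ + ((α²L + 2Gβ)/2)·‖u‖². -/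
/-!
Restricting `ψ` to the segment from `x` to `y` and integrating the Lipschitz bound on the
derivative gives the descent lemma `ψ y ≤ ψ x + ⟪∇ψ x, y - x⟫ + L/2 ‖y - x‖²`. Writing
`y - x = u + (y - x - u)`, the first-order term splits into `⟪∇ψ x, u⟫` plus an error of size
at most `G β ‖u‖²`, and the quadratic term is at most `L/2 α² ‖u‖²`.
-/

open scoped RealInnerProductSpace

open Set

theorem le_add_deriv_add_half_of_hasDerivAt {f f' : ℝ → ℝ} {C : ℝ}
    (hf : ∀ t, HasDerivAt f (f' t) t) (hf' : ∀ t ∈ Ioo (0 : ℝ) 1, f' t ≤ f' 0 + C * t) :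
    f 1 ≤ f 0 + f' 0 + C / 2 := by
  let g : ℝ → ℝ := fun t => f t - t * f' 0 - t ^ 2 * (C / 2)
  have hg : ∀ t, HasDerivAt g (f' t - f' 0 - C * t) t := fun t =>
    (((hf t).sub ((hasDerivAt_id' t).mul_const (f' 0))).sub
      ((hasDerivAt_pow 2 t).mul_const (C / 2))).congr_deriv (by ring)
  have hanti : AntitoneOn g (Icc 0 1) := by
    refine antitoneOn_of_hasDerivWithinAt_nonpos (convex_Icc 0 1)
      (HasDerivAt.continuousOn fun t _ => hg t) (fun t _ => (hg t).hasDerivWithinAt) ?_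
    rw [interior_Icc]
    intro t ht
    linarith [hf' t ht]
  have hg10 := hanti (left_mem_Icc.2 zero_le_one) (right_mem_Icc.2 zero_le_one) zero_le_one
  simp only [g] at hg10
  linarith

theorem nonneg_of_norm_sub_le_mul_norm_sub {E F : Type*} [NormedAddCommGroup E] [Nontrivial E]
    [SeminormedAddCommGroup F] {f : E → F} {L : ℝ} (hf : ∀ a b, ‖f a - f b‖ ≤ L * ‖a - b‖) :
    0 ≤ L := by
  obtain ⟨a, b, hab⟩ := exists_pair_ne E
  have := (norm_nonneg _).trans (hf a b)
  exact nonneg_of_mul_nonneg_left this (norm_pos_iff.2 (sub_ne_zero.2 hab))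

section InnerProductSpace

variable {E : Type*} [NormedAddCommGroup E] [InnerProductSpace ℝ E]

theorem real_inner_le_mul_of_norm_le {g w : E} {G B : ℝ} (hg : ‖g‖ ≤ G) (hw : ‖w‖ ≤ B) :
    ⟪g, w⟫ ≤ G * B :=
  (real_inner_le_norm g w).trans <|
    mul_le_mul hg hw (norm_nonneg w) ((norm_nonneg g).trans hg)

variable [CompleteSpace E] {ψ : E → ℝ} {ψ' : E → E}

theorem hasDerivAt_comp_add_smul (hgrad : ∀ z, HasGradientAt ψ (ψ' z) z) (x v : E) (t : ℝ) :
    HasDerivAt (fun s : ℝ => ψ (x + s • v)) ⟪ψ' (x + t • v), v⟫ t := by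
  have hline : HasDerivAt (fun s : ℝ => x + s • v) v t := by
    simpa using ((hasDerivAt_id t).smul_const v).const_add x
  simpa [Function.comp_def] using (hgrad (x + t • v)).hasFDerivAt.comp_hasDerivAt t hline

theorem le_add_inner_add_half_mul_norm_sq (hgrad : ∀ z, HasGradientAt ψ (ψ' z) z) {L : ℝ}
    (hlip : ∀ a b, ‖ψ' a - ψ' b‖ ≤ L * ‖a - b‖) (x y : E) :
    ψ y ≤ ψ x + ⟪ψ' x, y - x⟫ + L / 2 * ‖y - x‖ ^ 2 := by
  have hderiv := hasDerivAt_comp_add_smul hgrad x (y - x)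
  have hsegment := le_add_deriv_add_half_of_hasDerivAt (C := L * ‖y - x‖ ^ 2) hderiv fun t ht => by
    have hstep : ‖ψ' (x + t • (y - x)) - ψ' x‖ ≤ L * t * ‖y - x‖ := by
      simpa [norm_smul, abs_of_pos ht.1, mul_assoc] using hlip (x + t • (y - x)) x
    have hdiff := real_inner_le_mul_of_norm_le hstep (le_refl ‖y - x‖)
    rw [inner_sub_left] at hdiff
    simp only [zero_smul, add_zero]
    linarith
  simp only [zero_smul, add_zero, one_smul, add_sub_cancel] at hsegment
  linarith

end InnerProductSpace

theorem retraction_smoothness_general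
    {E : Type*} [NormedAddCommGroup E] [InnerProductSpace ℝ E] [FiniteDimensional ℝ E]
    (L : ℝ) (ψ : E → ℝ) (ψ' : E → E)
    (hgrad : ∀ x : E, HasGradientAt ψ (ψ' x) x)
    (hlip : ∀ x₁ x₂ : E, ‖ψ' x₁ - ψ' x₂‖ ≤ L * ‖x₁ - x₂‖)
    (x y u : E) (α β G : ℝ)
    (h1 : ‖y - x‖ ≤ α * ‖u‖) (h2 : ‖y - x - u‖ ≤ β * ‖u‖ ^ 2)
    (h3 : ‖ψ' x‖ ≤ G) :
    ψ y ≤ ψ x + ⟪ψ' x, u⟫ + ((α ^ 2 * L + 2 * G * β) / 2) * ‖u‖ ^ 2 := by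
  rcases subsingleton_or_nontrivial E with _ | _
  · simp [Subsingleton.elim y x, Subsingleton.elim u 0]
  have hL := nonneg_of_norm_sub_le_mul_norm_sub hlip
  have descent := le_add_inner_add_half_mul_norm_sq hgrad hlip x y
  have hsplit : ⟪ψ' x, y - x⟫ = ⟪ψ' x, u⟫ + ⟪ψ' x, y - x - u⟫ := by
    rw [← inner_add_right, add_sub_cancel]
  have herror := real_inner_le_mul_of_norm_le h3 h2
  have hquad : L / 2 * ‖y - x‖ ^ 2 ≤ L / 2 * (α * ‖u‖) ^ 2 :=
    mul_le_mul_of_nonneg_left (pow_le_pow_left₀ (norm_nonneg _) h1 2) (by positivity)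
  linarith

/-- Retraction smoothness from Euclidean smoothness: if `ψ` has `L`-Lipschitz gradient,
`‖y - x‖ ≤ α‖u‖`, `‖y - x - u‖ ≤ β‖u‖²` and `‖∇ψ(x)‖ ≤ G`, then
`ψ(y) ≤ ψ(x) + ⟪∇ψ(x), u⟫ + ((α²L + 2Gβ)/2)‖u‖²`. -/
theorem retraction_smoothness
    {E : Type*} [NormedAddCommGroup E] [InnerProductSpace ℝ E] [FiniteDimensional ℝ E]
    (L : ℝ) (ψ : E → ℝ) (ψ' : E → E)
    (hgrad : ∀ x : E, HasGradientAt ψ (ψ' x) x)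
    (hlip : ∀ x₁ x₂ : E, ‖ψ' x₁ - ψ' x₂‖ ≤ L * ‖x₁ - x₂‖)
    (x y u : E) (α β G : ℝ) (hα : 0 ≤ α) (hβ : 0 ≤ β) (hG : 0 ≤ G)
    (h1 : ‖y - x‖ ≤ α * ‖u‖) (h2 : ‖y - x - u‖ ≤ β * ‖u‖ ^ 2)
    (h3 : ‖ψ' x‖ ≤ G) :
    ψ y ≤ ψ x + ⟪ψ' x, u⟫ + ((α ^ 2 * L + 2 * G * β) / 2) * ‖u‖ ^ 2 :=
  retraction_smoothness_general L ψ ψ' hgrad hlip x y u α β G h1 h2 h3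
end
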